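/- arXiv:2002.07144 — 6 statements merged into one kernel-verified Lean document; each statement's English description precedes it below -/
import Mathlib

section
/- Let X, Y, Z be finite sets of the same cardinality and f : X → Y, g : Y → Z functions. Then there exist bijections h : Y → Z and h̃ : X → Y with h ∘ f = g ∘ h̃ if and only if there exists a bijection h : Y → Z such that |f⁻¹(y)| = |g⁻¹(h(y))| for all y ∈ Y. -/
open Finset

theorem card_filter_eq_of_semiconj {α β γ δ : Type*} [Fintype α] [Fintype β]
    [DecidableEq γ] [DecidableEq δ] (e : α ≃ β) (h : γ ≃ δ) {f : α → γ} {g : β → δ}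
    (hfg : ∀ a, h (f a) = g (e a)) (c : γ) :
    #{a | f a = c} = #{b | g b = h c} :=
  card_equiv e fun a => by simp [← hfg]

theorem exists_equiv_comp_eq_of_card_fiber_eq {α β γ : Type*} [Fintype α] [Fintype β]
    [DecidableEq γ] {f : α → γ} {g : β → γ} (hfg : ∀ c, #{a | f a = c} = #{b | g b = c}) :
    ∃ e : α ≃ β, ∀ a, g (e a) = f a :=
  ⟨Equiv.ofFiberEquiv fun c =>
      Fintype.equivOfCardEq (by simpa only [Fintype.card_subtype] using hfg c),
    Equiv.ofFiberEquiv_map _⟩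

theorem pseudoconjugate_iff_fiber_sizes_match_general
    {X Y Z : Type*} [Fintype X] [Fintype Y]
    [DecidableEq Y] [DecidableEq Z]
    (f : X → Y) (g : Y → Z) :
    (∃ (h : Y ≃ Z) (h' : X ≃ Y), ∀ x : X, h (f x) = g (h' x)) ↔
      (∃ h : Y ≃ Z, ∀ y : Y,
        (Finset.univ.filter fun x => f x = y).card =
          (Finset.univ.filter fun y' => g y' = h y).card) := by
  constructor
  · rintro ⟨h, e, hfg⟩
    exact ⟨h, card_filter_eq_of_semiconj e h hfg⟩
  · rintro ⟨h, hfg⟩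
    obtain ⟨e, he⟩ := exists_equiv_comp_eq_of_card_fiber_eq (f := f) (g := h.symm ∘ g)
      fun y => by simpa only [Function.comp_apply, Equiv.symm_apply_eq] using hfg y
    exact ⟨h, e, fun x => by rw [← he x, Function.comp_apply, Equiv.apply_symm_apply]⟩

theorem pseudoconjugate_iff_fiber_sizes_match
    {X Y Z : Type*} [Fintype X] [Fintype Y] [Fintype Z]
    [DecidableEq Y] [DecidableEq Z]
    (hXY : Fintype.card X = Fintype.card Y) (hYZ : Fintype.card Y = Fintype.card Z)
    (f : X → Y) (g : Y → Z) :
    (∃ (h : Y ≃ Z) (h' : X ≃ Y), ∀ x : X, h (f x) = g (h' x)) ↔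
      (∃ h : Y ≃ Z, ∀ y : Y,
        (Finset.univ.filter fun x => f x = y).card =
          (Finset.univ.filter fun y' => g y' = h y).card) :=
  pseudoconjugate_iff_fiber_sizes_match_general f g
end

section
/- For any function f : X → X on a finite set and any positive integer k, deg(f^k) ≥ deg(f), i.e., Σ_{y∈X} |(f^k)⁻¹(y)|² ≥ Σ_{y∈X} |f⁻¹(y)|². -/
/-! The fibre of `g ∘ f` over `c` is the disjoint union of the fibres of `f` over the points of
`g⁻¹(c)`, and the square of a sum of natural numbers dominates the sum of their squares. So
composing with any map on the left can only increase the sum of squared fibre sizes; apply this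
with `f^[k] = f^[k-1] ∘ f`. -/

open Finset

section

variable {α β γ : Type*} [Fintype α] [Fintype β] [DecidableEq β] [DecidableEq γ]

theorem Finset.card_fiber_comp_eq_sum (f : α → β) (g : β → γ) (c : γ) :
    #{a | g (f a) = c} = ∑ b with g b = c, #{a | f a = b} := by
  rw [card_eq_sum_card_fiberwise (f := f) (t := {b | g b = c}) (by intro a; simp)]
  refine sum_congr rfl fun b hb => ?_
  rw [filter_filter]
  exact congr_arg card <| filter_congr fun a _ =>
    ⟨And.right, fun h => ⟨h ▸ (mem_filter.1 hb).2, h⟩⟩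

theorem Finset.sum_sq_card_fiber_le_comp [Fintype γ] (f : α → β) (g : β → γ) :
    ∑ b, #{a | f a = b} ^ 2 ≤ ∑ c, #{a | g (f a) = c} ^ 2 :=
  calc ∑ b, #{a | f a = b} ^ 2
      = ∑ c, ∑ b with g b = c, #{a | f a = b} ^ 2 := (sum_fiberwise _ g _).symm
    _ ≤ ∑ c, (∑ b with g b = c, #{a | f a = b}) ^ 2 :=
        sum_le_sum fun _ _ => sum_sq_le_sq_sum_of_nonneg fun _ _ => Nat.zero_le _
    _ = ∑ c, #{a | g (f a) = c} ^ 2 := by simp only [card_fiber_comp_eq_sum]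

end

theorem sum_sq_fibers_iterate_ge
    {X : Type*} [Fintype X] [DecidableEq X] (f : X → X) (k : ℕ) (hk : 1 ≤ k) :
    ∑ y : X, (Finset.univ.filter fun x => f x = y).card ^ 2 ≤
      ∑ y : X, (Finset.univ.filter fun x => f^[k] x = y).card ^ 2 := by
  obtain ⟨n, rfl⟩ := Nat.exists_eq_add_of_le' hk
  rw [Function.iterate_succ]
  exact sum_sq_card_fiber_le_comp f f^[n]
end

section
/- For any functions f, g : X → X on a finite nonempty set X of size n, deg(f ∘ g) ≤ √n · √(deg(f)) · deg(g). Equivalently, (Σ_{z} |(f∘g)⁻¹(z)|²)² ≤ n · (Σ_{y} |f⁻¹(y)|²) · (Σ_{y} |g⁻¹(y)|²)². -/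
/-!
Write `S h = ∑_y |h⁻¹(y)|²`, so that `deg h = S h / n`. The fibre of `f ∘ g` over `z` is the
disjoint union of the fibres of `g` over the points of `f⁻¹(z)`. Cauchy–Schwarz on each such
fibre gives `|(f ∘ g)⁻¹(z)|² ≤ |f⁻¹(z)| · c z` with `c z = ∑_{y ∈ f⁻¹(z)} |g⁻¹(y)|²`, and
Cauchy–Schwarz over `z`, together with `‖c‖₂ ≤ ‖c‖₁ = S g`, gives `S (f ∘ g) ≤ √(S f) · S g`.
Dividing by `n` yields the claim.
-/

/-- The degree of noninvertibility of `f : X → X`, as a real number. -/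
noncomputable def degree {X : Type*} [Fintype X] [DecidableEq X] (f : X → X) : ℝ :=
  (∑ y : X, ((Finset.univ.filter fun x => f x = y).card : ℝ) ^ 2) / Fintype.card X

open Finset

lemma Real.sum_mul_le_sqrt_sum_sq_mul_sum {ι : Type*} (s : Finset ι) (a c : ι → ℝ)
    (hc : ∀ i ∈ s, 0 ≤ c i) :
    ∑ i ∈ s, a i * c i ≤ √(∑ i ∈ s, a i ^ 2) * ∑ i ∈ s, c i := by
  calc ∑ i ∈ s, a i * c i ≤ √(∑ i ∈ s, a i ^ 2) * √(∑ i ∈ s, c i ^ 2) :=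
        Real.sum_mul_le_sqrt_mul_sqrt s a c
    _ ≤ √(∑ i ∈ s, a i ^ 2) * ∑ i ∈ s, c i := by
        gcongr
        exact Real.sqrt_le_iff.mpr ⟨sum_nonneg hc, sum_sq_le_sq_sum_of_nonneg hc⟩

section Fibres

variable {α β γ : Type*} [Fintype α] [Fintype β] [DecidableEq β] [DecidableEq γ]

noncomputable def sumSqFiberCard (h : α → β) : ℝ :=
  ∑ y, (#{x | h x = y} : ℝ) ^ 2

lemma card_fiber_comp (f : β → γ) (g : α → β) (z : γ) :
    #{x | f (g x) = z} = ∑ y ∈ {y | f y = z}, #{x | g x = y} := by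
  rw [card_eq_sum_card_fiberwise (f := g) (t := {y | f y = z}) (fun x hx => by simpa using hx)]
  refine sum_congr rfl fun y hy => ?_
  congr 1
  ext x
  simp only [mem_filter, mem_univ, true_and] at hy ⊢
  exact ⟨And.right, fun hx => ⟨hx ▸ hy, hx⟩⟩

lemma sq_card_fiber_comp_le (f : β → γ) (g : α → β) (z : γ) :
    (#{x | f (g x) = z} : ℝ) ^ 2 ≤
      #{y | f y = z} * ∑ y ∈ {y | f y = z}, (#{x | g x = y} : ℝ) ^ 2 := by
  rw [card_fiber_comp, Nat.cast_sum]
  exact sq_sum_le_card_mul_sum_sq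

variable [Fintype γ]

lemma sumSqFiberCard_comp_le (f : β → γ) (g : α → β) :
    sumSqFiberCard (f ∘ g) ≤ √(sumSqFiberCard f) * sumSqFiberCard g := by
  set c : γ → ℝ := fun z => ∑ y ∈ {y | f y = z}, (#{x | g x = y} : ℝ) ^ 2
  have hc_sum : ∑ z, c z = sumSqFiberCard g := sum_fiberwise univ f _
  calc sumSqFiberCard (f ∘ g) ≤ ∑ z, (#{y | f y = z} : ℝ) * c z :=
        sum_le_sum fun z _ => sq_card_fiber_comp_le f g z
    _ ≤ √(sumSqFiberCard f) * ∑ z, c z :=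
        Real.sum_mul_le_sqrt_sum_sq_mul_sum _ _ _ fun z _ => sum_nonneg fun _ _ => sq_nonneg _
    _ = √(sumSqFiberCard f) * sumSqFiberCard g := by rw [hc_sum]

end Fibres

theorem deg_comp_le_sqrt_mul_general
    {X : Type*} [Fintype X] [DecidableEq X] (f g : X → X) :
    degree (f ∘ g) ≤
      Real.sqrt (Fintype.card X) * Real.sqrt (degree f) * degree g := by
  rcases isEmpty_or_nonempty X with _ | _
  · simp [degree]
  have hn : 0 < (Fintype.card X : ℝ) := by exact_mod_cast Fintype.card_pos
  have hdeg (h : X → X) : degree h = sumSqFiberCard h / Fintype.card X := rfl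
  rw [hdeg, hdeg, hdeg, Real.sqrt_div' _ hn.le, mul_div_cancel₀ _ (Real.sqrt_pos.mpr hn).ne',
    ← mul_div_assoc]
  gcongr
  exact sumSqFiberCard_comp_le f g

theorem deg_comp_le_sqrt_mul
    {X : Type*} [Fintype X] [DecidableEq X] [Nonempty X] (f g : X → X) :
    degree (f ∘ g) ≤
      Real.sqrt (Fintype.card X) * Real.sqrt (degree f) * degree g :=
  deg_comp_le_sqrt_mul_general f g
end

section
/- For any function f : X → X on a finite nonempty set X of size n and any integer k ≥ 1, deg(f^k) ≤ deg(f)^(2 - 1/2^(k-1)) · n^(1 - 1/2^(k-1)). -/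
open Finset

theorem sum_sq_sum_fiberwise_le {ι κ : Type*} [Fintype ι] [Fintype κ] [DecidableEq κ]
    (g : ι → κ) (a : ι → ℝ) :
    ∑ z, (∑ y with g y = z, a y) ^ 2 ≤ √(∑ z, (#{y | g y = z} : ℝ) ^ 2) * ∑ y, a y ^ 2 := by
  have hfiber_nonneg (z : κ) : 0 ≤ ∑ y with g y = z, a y ^ 2 := sum_nonneg fun y _ => sq_nonneg _
  calc ∑ z, (∑ y with g y = z, a y) ^ 2
      ≤ ∑ z, (#{y | g y = z} : ℝ) * ∑ y with g y = z, a y ^ 2 :=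
        sum_le_sum fun z _ => sq_sum_le_card_mul_sum_sq
    _ ≤ √(∑ z, (#{y | g y = z} : ℝ) ^ 2) * √(∑ z, (∑ y with g y = z, a y ^ 2) ^ 2) :=
        Real.sum_mul_le_sqrt_mul_sqrt _ _ _
    _ ≤ √(∑ z, (#{y | g y = z} : ℝ) ^ 2) * ∑ z, ∑ y with g y = z, a y ^ 2 := by
        gcongr
        exact (Real.sqrt_le_left (sum_nonneg fun z _ => hfiber_nonneg z)).mpr
          (sum_sq_le_sq_sum_of_nonneg fun z _ => hfiber_nonneg z)
    _ = √(∑ z, (#{y | g y = z} : ℝ) ^ 2) * ∑ y, a y ^ 2 := by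
        rw [sum_fiberwise]

theorem card_filter_comp_eq_sum {α β γ : Type*} [Fintype α] [Fintype β] [DecidableEq β]
    [DecidableEq γ] (f : α → β) (g : β → γ) (z : γ) :
    #{x | g (f x) = z} = ∑ y with g y = z, #{x | f x = y} := by
  rw [card_eq_sum_card_fiberwise (f := f) (t := {y | g y = z}) (by intro x; simp)]
  refine sum_congr rfl fun y hy => congrArg card ?_
  ext x
  simp only [mem_filter, mem_univ, true_and] at hy ⊢
  exact ⟨And.right, fun hx => ⟨hx ▸ hy, hx⟩⟩

section Degree

variable {X : Type*} [Fintype X] [DecidableEq X] [Nonempty X]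

theorem sum_sq_card_fiber_eq (f : X → X) :
    ∑ y, (#{x | f x = y} : ℝ) ^ 2 = Fintype.card X * degree f := by
  rw [degree, mul_div_cancel₀ _ (by positivity)]

theorem one_le_degree (f : X → X) : 1 ≤ degree f := by
  have hcard : (Fintype.card X : ℝ) = ∑ y, (#{x | f x = y} : ℝ) := by
    exact_mod_cast card_eq_sum_card_fiberwise fun x _ => mem_univ (f x)
  rw [degree, le_div_iff₀ (by positivity), one_mul, hcard]
  refine sum_le_sum fun y _ => ?_
  exact_mod_cast Nat.le_self_pow two_ne_zero _

theorem degree_comp_le (f g : X → X) :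
    degree (g ∘ f) ≤ degree f * √(Fintype.card X * degree g) := by
  have hn : (0 : ℝ) < Fintype.card X := by positivity
  rw [degree, div_le_iff₀ hn]
  simp only [Function.comp_apply, card_filter_comp_eq_sum f g, Nat.cast_sum]
  calc ∑ z, (∑ y with g y = z, (#{x | f x = y} : ℝ)) ^ 2
      ≤ √(∑ z, (#{y | g y = z} : ℝ) ^ 2) * ∑ y, (#{x | f x = y} : ℝ) ^ 2 :=
        sum_sq_sum_fiberwise_le g _
    _ = degree f * √(Fintype.card X * degree g) * Fintype.card X := by
        rw [sum_sq_card_fiber_eq, sum_sq_card_fiber_eq]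
        ring

end Degree

theorem Real.mul_sqrt_mul_rpow_mul_rpow {D N : ℝ} (hD : 0 < D) (hN : 0 < N) (s t : ℝ) :
    D * √(N * (D ^ s * N ^ t)) = D ^ (1 + s / 2) * N ^ ((1 + t) / 2) := by
  have hNt : N * N ^ t = N ^ (1 + t) := by rw [rpow_add hN, rpow_one]
  rw [mul_left_comm, hNt, sqrt_eq_rpow,
    mul_rpow (by positivity) (by positivity), ← rpow_mul hD.le, ← rpow_mul hN.le,
    ← mul_assoc, rpow_add hD, rpow_one]
  ring_nf

theorem deg_iterate_le
    {X : Type*} [Fintype X] [DecidableEq X] [Nonempty X] (f : X → X) (k : ℕ) (hk : 1 ≤ k) :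
    degree (f^[k]) ≤
      degree f ^ ((2 : ℝ) - 1 / 2 ^ (k - 1)) *
        (Fintype.card X : ℝ) ^ ((1 : ℝ) - 1 / 2 ^ (k - 1)) := by
  have hD : 0 < degree f := one_pos.trans_le (one_le_degree f)
  have hN : (0 : ℝ) < Fintype.card X := by positivity
  obtain ⟨m, rfl⟩ := Nat.exists_eq_add_of_le' hk
  clear hk
  rw [Nat.add_sub_cancel]
  induction m with
  | zero => norm_num
  | succ m ih =>
    calc degree f^[m + 1 + 1]
        ≤ degree f * √(Fintype.card X * degree f^[m + 1]) := by
          rw [Function.iterate_succ]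
          exact degree_comp_le f _
      _ ≤ degree f * √(Fintype.card X * (degree f ^ ((2 : ℝ) - 1 / 2 ^ m) *
            (Fintype.card X : ℝ) ^ ((1 : ℝ) - 1 / 2 ^ m))) := by
          gcongr
      _ = _ := by
          rw [Real.mul_sqrt_mul_rpow_mul_rpow hD hN, pow_succ]
          ring_nf
end

section
/- The bubble sort map B on permutations decreases each nonzero entry of the inversion table by 1: for every permutation σ ∈ S_n and every j ∈ [n], e_j(B(σ)) = max(0, e_j(σ) − 1), where e_j(π) is the number of entries of π appearing to the left of the value j that are greater than j. -/
/-- One step of bubble sort: compare the entries in positions `i` and `i+1`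
(0-indexed) and swap them if they form a descent. -/
def bubbleStep (n : ℕ) (i : ℕ) (π : Equiv.Perm (Fin n)) : Equiv.Perm (Fin n) :=
  if h : i + 1 < n then
    if π ⟨i + 1, h⟩ < π ⟨i, Nat.lt_of_succ_lt h⟩ then
      π * Equiv.swap ⟨i, Nat.lt_of_succ_lt h⟩ ⟨i + 1, h⟩
    else π
  else π

/-- The bubble sort map `B = t_{n-1} ∘ ⋯ ∘ t_1`. -/
def bubbleSort (n : ℕ) (π : Equiv.Perm (Fin n)) : Equiv.Perm (Fin n) :=
  (List.range (n - 1)).foldl (fun σ i => bubbleStep n i σ) π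

/-- `invEntry n π j` is the entry `e_j(π)` of the inversion table of `π`:
the number of entries of `π` appearing to the left of the value `j` that
are greater than `j`. -/
def invEntry (n : ℕ) (π : Equiv.Perm (Fin n)) (j : Fin n) : ℕ :=
  (Finset.univ.filter fun i : Fin n => i < π.symm j ∧ j < π i).card

/-!
A pass of bubble sort carries the running maximum of the prefix along: after the comparisons
at positions `0, …, k - 1`, position `k` holds `max σ(0), …, σ(k)` and the positions beyond
are untouched. Swapping an adjacent descent `(a, b)` changes the relative order of that one pair
only, so it lowers `e_b` by one and leaves every other entry of the inversion table alone. Hence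
`e_j` changes at most once during the pass: when the comparison reaches the original position
`p` of `j`, and then `j` is swapped leftward exactly when the running maximum of
`σ(0), …, σ(p - 1)` exceeds `j`, i.e. exactly when `e_j(σ) > 0`.
-/

open Finset

variable {n : ℕ}

theorem invEntry_mul_swap (π : Equiv.Perm (Fin n)) (x y j : Fin n) :
    invEntry n (π * Equiv.swap x y) j =
      #{i | Equiv.swap x y i < Equiv.swap x y (π.symm j) ∧ j < π i} := by
  have hsymm : (π * Equiv.swap x y).symm j = Equiv.swap x y (π.symm j) := by
    rw [Equiv.Perm.mul_def, Equiv.symm_trans_apply, Equiv.symm_swap]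
  refine (card_equiv (Equiv.swap x y) fun i => ?_).symm
  simp [hsymm]

theorem swap_apply_lt_swap_apply_iff {x y i m : Fin n} (hxy : (y : ℕ) = x + 1)
    (h : ¬(i = x ∧ m = y)) (h' : ¬(i = y ∧ m = x)) :
    Equiv.swap x y i < Equiv.swap x y m ↔ i < m := by
  simp only [Equiv.swap_apply_def, Fin.ext_iff, Fin.lt_def] at *
  split_ifs <;> omega

theorem invEntry_mul_swap_add_one {π : Equiv.Perm (Fin n)} {x y : Fin n}
    (hxy : (y : ℕ) = x + 1) (hdesc : π y < π x) :
    invEntry n (π * Equiv.swap x y) (π y) + 1 = invEntry n π (π y) := by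
  have hxy' : x < y := by rw [Fin.lt_def]; omega
  have hx : x ∈ ({i | i < y ∧ π y < π i} : Finset (Fin n)) := by simp [hxy', hdesc]
  rw [invEntry_mul_swap, invEntry, π.symm_apply_apply, Equiv.swap_apply_right,
    ← card_erase_add_one hx]
  congr 2
  ext i
  by_cases hix : i = x
  · subst hix
    simp [hxy'.not_gt]
  · have hiy := swap_apply_lt_swap_apply_iff (i := i) (m := y) hxy (by tauto)
      (by rintro ⟨-, rfl⟩; exact hxy'.ne rfl)
    rw [Equiv.swap_apply_right] at hiy
    simp [hix, hiy]

theorem invEntry_mul_swap_of_ne {π : Equiv.Perm (Fin n)} {x y j : Fin n}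
    (hxy : (y : ℕ) = x + 1) (hdesc : π y < π x) (hj : π y ≠ j) :
    invEntry n (π * Equiv.swap x y) j = invEntry n π j := by
  rw [invEntry_mul_swap, invEntry]
  congr 1
  ext i : 1
  simp only [mem_filter, mem_univ, true_and]
  by_cases hiy : i = y ∧ π.symm j = x
  · obtain ⟨rfl, hjx⟩ := hiy
    rw [π.symm_apply_eq] at hjx
    subst hjx
    simp [hdesc.not_gt]
  · rw [swap_apply_lt_swap_apply_iff hxy _ hiy]
    rintro ⟨rfl, hjy⟩
    exact hj (π.symm_apply_eq.mp hjy).symm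

theorem invEntry_eq_zero_of_forall_le {π : Equiv.Perm (Fin n)} {j : Fin n}
    (h : ∀ i < π.symm j, π i ≤ j) : invEntry n π j = 0 := by
  rw [invEntry, card_eq_zero, filter_eq_empty_iff]
  exact fun i _ hi => (h i hi.1).not_gt hi.2

theorem bubbleStep_apply_succ {k : ℕ} (h : k + 1 < n) (π : Equiv.Perm (Fin n)) :
    bubbleStep n k π ⟨k + 1, h⟩ = max (π ⟨k, by omega⟩) (π ⟨k + 1, h⟩) := by
  rw [bubbleStep, dif_pos h]
  split_ifs with hdesc
  · simp [max_eq_left hdesc.le]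
  · simp [max_eq_right (not_lt.mp hdesc)]

theorem bubbleStep_apply_of_ne {k : ℕ} {i : Fin n} (h : (i : ℕ) ≠ k)
    (h' : (i : ℕ) ≠ k + 1) (π : Equiv.Perm (Fin n)) : bubbleStep n k π i = π i := by
  rw [bubbleStep]
  split_ifs
  · rw [Equiv.Perm.mul_apply, Equiv.swap_apply_of_ne_of_ne (by simpa [Fin.ext_iff] using h)
      (by simpa [Fin.ext_iff] using h')]
  all_goals rfl

theorem invEntry_bubbleStep_of_apply_ne {k : ℕ} (h : k + 1 < n) {π : Equiv.Perm (Fin n)}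
    {j : Fin n} (hj : π ⟨k + 1, h⟩ ≠ j) :
    invEntry n (bubbleStep n k π) j = invEntry n π j := by
  rw [bubbleStep, dif_pos h]
  split_ifs with hdesc
  · exact invEntry_mul_swap_of_ne rfl hdesc hj
  · rfl

def partialBubbleSort (n k : ℕ) (σ : Equiv.Perm (Fin n)) : Equiv.Perm (Fin n) :=
  (List.range k).foldl (fun τ i => bubbleStep n i τ) σ

theorem partialBubbleSort_succ (k : ℕ) (σ : Equiv.Perm (Fin n)) :
    partialBubbleSort n (k + 1) σ = bubbleStep n k (partialBubbleSort n k σ) := by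
  simp [partialBubbleSort, List.range_succ]

theorem partialBubbleSort_apply_of_lt {k : ℕ} {i : Fin n} (hi : k < i)
    (σ : Equiv.Perm (Fin n)) :
    partialBubbleSort n k σ i = σ i := by
  induction k with
  | zero => rfl
  | succ k ih =>
    rw [partialBubbleSort_succ, bubbleStep_apply_of_ne (by omega) (by omega), ih (by omega)]

theorem apply_le_partialBubbleSort_apply {k : ℕ} (hk : k < n) {i : Fin n} (hi : (i : ℕ) ≤ k)
    (σ : Equiv.Perm (Fin n)) : σ i ≤ partialBubbleSort n k σ ⟨k, hk⟩ := by
  induction k with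
  | zero => exact (congrArg σ (Fin.ext (Nat.le_zero.mp hi))).le
  | succ k ih =>
    rw [partialBubbleSort_succ, bubbleStep_apply_succ hk,
      partialBubbleSort_apply_of_lt (i := ⟨k + 1, hk⟩) (by simp)]
    rcases hi.lt_or_eq with hi | hi
    · exact le_max_of_le_left (ih (by omega) (by omega))
    · exact le_max_of_le_right (congrArg σ (Fin.ext hi)).le

theorem invEntry_apply_eq_zero_of_partialBubbleSort_le {k : ℕ} (h : k + 1 < n)
    {σ : Equiv.Perm (Fin n)}
    (hle : partialBubbleSort n k σ ⟨k, by omega⟩ ≤ σ ⟨k + 1, h⟩) :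
    invEntry n σ (σ ⟨k + 1, h⟩) = 0 :=
  invEntry_eq_zero_of_forall_le fun i hi => by
    rw [σ.symm_apply_apply] at hi
    exact (apply_le_partialBubbleSort_apply _ (Nat.le_of_lt_succ hi) σ).trans hle

theorem invEntry_partialBubbleSort (σ : Equiv.Perm (Fin n)) (j : Fin n) (k : ℕ) :
    invEntry n (partialBubbleSort n k σ) j =
      invEntry n σ j - if (σ.symm j : ℕ) ≤ k then 1 else 0 := by
  induction k with
  | zero =>
    change invEntry n σ j = _
    split_ifs with hj
    · have : invEntry n σ j = 0 :=
        invEntry_eq_zero_of_forall_le fun i hi => absurd hi (by rw [Fin.lt_def]; omega)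
      omega
    · rfl
  | succ k ih =>
    rw [partialBubbleSort_succ]
    set π := partialBubbleSort n k σ
    by_cases h : k + 1 < n
    swap
    · have := (σ.symm j).isLt
      rw [bubbleStep, dif_neg h, ih, if_pos (by omega), if_pos (by omega)]
    have hfr : π ⟨k + 1, h⟩ = σ ⟨k + 1, h⟩ := partialBubbleSort_apply_of_lt (by simp) σ
    by_cases hj : σ ⟨k + 1, h⟩ = j
    · subst hj
      have hπσ : invEntry n π (σ ⟨k + 1, h⟩) = invEntry n σ (σ ⟨k + 1, h⟩) := by
        rw [ih, if_neg (by simp), Nat.sub_zero]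
      rw [if_pos (by simp), ← hπσ, bubbleStep, dif_pos h]
      split_ifs with hdesc
      · have := invEntry_mul_swap_add_one (π := π) rfl hdesc
        rw [hfr] at this
        omega
      · have := invEntry_apply_eq_zero_of_partialBubbleSort_le h (hfr ▸ not_lt.mp hdesc)
        omega
    · rw [invEntry_bubbleStep_of_apply_ne h (hfr ▸ hj), ih]
      have : (σ.symm j : ℕ) ≠ k + 1 := fun hjk => hj (σ.eq_symm_apply.mp (Fin.ext hjk.symm))
      simp only [show (σ.symm j : ℕ) ≤ k ↔ (σ.symm j : ℕ) ≤ k + 1 by omega]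

/-- Truncated subtraction on `ℕ` realizes `max (0, e_j(σ) - 1)`. -/
theorem invEntry_bubbleSort (n : ℕ) (σ : Equiv.Perm (Fin n)) (j : Fin n) :
    invEntry n (bubbleSort n σ) j = invEntry n σ j - 1 := by
  have := (σ.symm j).isLt
  rw [show bubbleSort n σ = partialBubbleSort n (n - 1) σ from rfl, invEntry_partialBubbleSort,
    if_pos (by omega)]
end

section
/- For each n ≥ 2, the degree of the nibble sort map nib : {0,1}ⁿ → {0,1}ⁿ is 3/2; equivalently, Σ_{w∈{0,1}ⁿ} |nib⁻¹(w)|² = 3·2^(n−1). Moreover, exactly 2^(n−1) words have exactly one preimage, exactly 2^(n−2) words have exactly two preimages, and no word has more than two preimages. -/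
/-- Extend a binary word of length `n` by `1`s beyond its end (so that no new
occurrence of the factor `10` is created). Here `true` plays the role of the
letter `1` and `false` the role of `0`. -/
def extWord (n : ℕ) (w : Fin n → Bool) : ℕ → Bool :=
  fun j => if h : j < n then w ⟨j, h⟩ else true

/-- The nibble sort map on binary words: replace the leftmost occurrence of the
factor `10` by `01`; if there is no such factor, do nothing. -/
def nib (n : ℕ) (w : Fin n → Bool) : Fin n → Bool :=
  letI D : Finset (Fin n) := Finset.univ.filter fun i : Fin n =>
    extWord n w i = true ∧ extWord n w ((i : ℕ) + 1) = false
  if h : D.Nonempty then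
    letI i := D.min' h
    fun j => if j = i then false else if (j : ℕ) = (i : ℕ) + 1 then true else w j
  else w

/-!
Let `d` be the leftmost descent `10` of `w` and `q = min (n - 1) (d + 2)` (`q = n - 1` if `w` is
sorted). A preimage of `w` is `w` itself when `w` is sorted, or `w` with an ascent `01` at some
`i < q` turned back into `10`. Since ascents and descents alternate, the ascents below `q`
outnumber the descents below `q` (one if `w` is unsorted, none otherwise) by `w_q - w_0`, so `w`
has exactly `[w_0 = 0] + [w_q = 1]` preimages. As `q` only depends on the letters before position
`q ≥ 1`, flipping the letter at `q` is an involution fixing `w_0` and exchanging `w_q = 0` with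
`w_q = 1`; hence `2 ^ (n - 2)` words have two preimages, and `∑ |nib⁻¹ w| = 2 ^ n` gives the
rest.
-/

open Finset Function

theorem two_mul_card_filter_apply_eq_true {ι : Type*} [Fintype ι] [DecidableEq ι]
    (p : (ι → Bool) → ι) (hp : ∀ w b, p (update w (p w) b) = p w)
    (P : (ι → Bool) → Prop) [DecidablePred P] (hP : ∀ w b, P (update w (p w) b) ↔ P w) :
    2 * #{w | P w ∧ w (p w) = true} = #{w | P w} := by
  set toggle : (ι → Bool) → (ι → Bool) := fun w => update w (p w) (!w (p w))
  have htoggle : ∀ w, toggle (toggle w) = w := fun w => by simp [toggle, hp]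
  have hcard : #{w | P w ∧ w (p w) = true} = #{w | P w ∧ w (p w) = false} := by
    refine card_nbij' toggle toggle (fun w hw => ?_) (fun w hw => ?_) (fun w _ => htoggle w)
      (fun w _ => htoggle w) <;> simp_all [toggle]
  rw [two_mul]
  nth_rw 2 [hcard]
  rw [← card_union_of_disjoint (disjoint_filter.2 fun w _ h1 h2 => by simp_all), ← filter_or]
  congr 1
  ext w
  simp only [mem_filter, mem_univ, true_and, ← and_or_left, Bool.eq_false_or_eq_true, and_true]

theorem sum_pow_eq_of_le_two {α : Type*} (s : Finset α) (F : α → ℕ)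
    (hF : ∀ a ∈ s, F a ≤ 2) {k : ℕ} (hk : k ≠ 0) :
    ∑ a ∈ s, F a ^ k = #{a ∈ s | F a = 1} + 2 ^ k * #{a ∈ s | F a = 2} := by
  rw [card_filter, card_filter, mul_sum, ← sum_add_distrib]
  refine sum_congr rfl fun a ha => ?_
  have := hF a ha
  interval_cases F a <;> simp [hk]

namespace BinarySeq

variable {f g : ℕ → Bool} {N i k : ℕ}

theorem not_monotone_iff : ¬ Monotone f ↔ ∃ i, f (i + 1) < f i := by
  refine ⟨fun h => ?_, fun ⟨i, hi⟩ h => (h i.le_succ).not_gt hi⟩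
  by_contra! hle
  exact h (monotone_nat_of_le_succ hle)

theorem card_ascents_add (f : ℕ → Bool) (K : ℕ) :
    #{i ∈ range K | f i < f (i + 1)} + (f 0).toNat =
      #{i ∈ range K | f (i + 1) < f i} + (f K).toNat := by
  induction K with
  | zero => simp
  | succ K ih =>
    rw [card_filter, card_filter] at ih ⊢
    rw [sum_range_succ, sum_range_succ]
    revert ih
    cases f K <;> cases f (K + 1) <;> simp [Bool.lt_iff]
    omega

open Classical in
noncomputable def nibSeq (f : ℕ → Bool) : ℕ → Bool :=
  if h : ∃ i, f (i + 1) < f i then f ∘ Equiv.swap (Nat.find h) (Nat.find h + 1) else f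

theorem nibSeq_of_monotone (hf : Monotone f) : nibSeq f = f :=
  dif_neg (not_monotone_iff.not_right.mp hf)

theorem nibSeq_of_descent (h : ∃ i, f (i + 1) < f i) :
    nibSeq f = f ∘ Equiv.swap (Nat.find h) (Nat.find h + 1) :=
  dif_pos h

def IsNibSite (f : ℕ → Bool) (i : ℕ) : Prop :=
  f i < f (i + 1) ∧ ∀ k, k + 1 < i → f k ≤ f (k + 1)

theorem comp_swap_apply (f : ℕ → Bool) (i j : ℕ) :
    (f ∘ Equiv.swap i (i + 1)) j =
      if j = i then f (i + 1) else if j = i + 1 then f i else f j := by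
  simp only [comp_apply, Equiv.swap_apply_def]
  split_ifs <;> rfl

theorem nibSeq_comp_swap (h : IsNibSite f i) : nibSeq (f ∘ Equiv.swap i (i + 1)) = f := by
  have hdesc : ∃ j, (f ∘ Equiv.swap i (i + 1)) (j + 1) < (f ∘ Equiv.swap i (i + 1)) j :=
    ⟨i, by simpa [comp_swap_apply] using h.1⟩
  have hfind : Nat.find hdesc = i := by
    refine (Nat.find_eq_iff _).2 ⟨by simpa [comp_swap_apply] using h.1, fun k hk => ?_⟩
    rw [not_lt, comp_swap_apply, comp_swap_apply, if_neg hk.ne, if_neg (by omega)]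
    rcases Nat.lt_or_ge (k + 1) i with hk' | hk'
    · rw [if_neg hk'.ne, if_neg (by omega)]
      exact h.2 k hk'
    · rw [if_pos (by omega), (Bool.lt_iff.1 h.1).2]
      exact Bool.le_true _
  ext j
  simp [nibSeq_of_descent hdesc, hfind]

theorem isNibSite_nibSeq (h : ∃ i, f (i + 1) < f i) : IsNibSite (nibSeq f) (Nat.find h) := by
  have hp := Nat.find_spec h
  rw [nibSeq_of_descent h]
  refine ⟨by simpa [comp_swap_apply] using hp, fun k hk => ?_⟩
  rw [comp_swap_apply, comp_swap_apply, if_neg (by omega), if_neg (by omega), if_neg (by omega),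
    if_neg (by omega)]
  exact not_lt.1 (Nat.find_min h (by omega))

theorem nibSeq_comp_swap_find (h : ∃ i, f (i + 1) < f i) :
    nibSeq f ∘ Equiv.swap (Nat.find h) (Nat.find h + 1) = f := by
  ext j
  simp [nibSeq_of_descent h]

theorem nibSeq_eq_iff :
    nibSeq g = f ↔
      (Monotone f ∧ g = f) ∨ ∃ i, IsNibSite f i ∧ g = f ∘ Equiv.swap i (i + 1) := by
  constructor
  · rintro rfl
    by_cases hg : Monotone g
    · rw [nibSeq_of_monotone hg]
      exact .inl ⟨hg, rfl⟩
    · have h := not_monotone_iff.1 hg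
      exact .inr ⟨_, isNibSite_nibSeq h, (nibSeq_comp_swap_find h).symm⟩
  · rintro (⟨hf, rfl⟩ | ⟨i, hi, rfl⟩)
    · exact nibSeq_of_monotone hf
    · exact nibSeq_comp_swap hi

open Classical in
/-- `min N (d + 2)`, where `d` is the first descent of `f` (and `N` if there is none). -/
noncomputable def pivot (N : ℕ) (f : ℕ → Bool) : ℕ :=
  Nat.find (⟨N, .inl rfl⟩ : ∃ j, j = N ∨ ∃ k, j = k + 2 ∧ f (k + 1) < f k)

open Classical in
theorem pivot_le : pivot N f ≤ N :=
  Nat.find_min' _ (.inl rfl)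

open Classical in
theorem pivot_eq_or : pivot N f = N ∨ ∃ k, pivot N f = k + 2 ∧ f (k + 1) < f k :=
  Nat.find_spec (⟨N, .inl rfl⟩ : ∃ j, j = N ∨ ∃ k, j = k + 2 ∧ f (k + 1) < f k)

open Classical in
theorem le_succ_of_add_two_lt_pivot (hk : k + 2 < pivot N f) : f k ≤ f (k + 1) :=
  not_lt.1 fun hd => Nat.find_min _ hk (.inr ⟨k, rfl, hd⟩)

theorem pivot_pos (hN : 0 < N) : 0 < pivot N f := by
  rcases pivot_eq_or (N := N) (f := f) with h | ⟨k, h, -⟩ <;> omega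

open Classical in
theorem pivot_congr (h : ∀ i < pivot N f, g i = f i) : pivot N g = pivot N f := by
  have hiff : ∀ j ≤ pivot N f, (∃ k, j = k + 2 ∧ g (k + 1) < g k) ↔
      ∃ k, j = k + 2 ∧ f (k + 1) < f k := by
    refine fun j hj => exists_congr fun k => and_congr_right fun hjk => ?_
    rw [h k (by omega), h (k + 1) (by omega)]
  refine (Nat.find_eq_iff _).2 ⟨?_, fun j hj => ?_⟩
  · rw [hiff _ le_rfl]
    exact pivot_eq_or
  · rw [hiff _ hj.le]
    exact Nat.find_min _ hj

theorem isNibSite_iff_lt_pivot (hi : i < N) :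
    IsNibSite f i ↔ f i < f (i + 1) ∧ i < pivot N f := by
  refine ⟨fun h => ⟨h.1, ?_⟩, fun h => ⟨h.1, fun k hk => ?_⟩⟩
  · by_contra! hle
    rcases pivot_eq_or (N := N) (f := f) with hq | ⟨k, hq, hk⟩
    · omega
    · exact (h.2 k (by omega)).not_gt hk
  · exact le_succ_of_add_two_lt_pivot (N := N) (by omega)

open Classical in
theorem card_descents_lt_pivot (hf : ∀ i, N < i → f i = true) :
    #{i ∈ range (pivot N f) | f (i + 1) < f i} = if Monotone f then 0 else 1 := by
  split_ifs with hmono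
  · exact card_eq_zero.2 <| filter_eq_empty_iff.2 fun i _ => not_lt.2 (hmono i.le_succ)
  refine le_antisymm (card_le_one.2 fun a ha b hb => ?_) (card_pos.2 ?_)
  · simp only [mem_filter, mem_range] at ha hb
    by_contra hab
    wlog hlt : a < b generalizing a b
    · exact this b a hb ha (Ne.symm hab) (by omega)
    rcases Nat.lt_or_ge (a + 2) (pivot N f) with h | h
    · exact (le_succ_of_add_two_lt_pivot h).not_gt ha.2
    · obtain rfl : b = a + 1 := by omega
      exact absurd (Bool.lt_iff.1 hb.2).2 (by simp [(Bool.lt_iff.1 ha.2).1])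
  · obtain ⟨d, hd⟩ := not_monotone_iff.1 hmono
    rcases pivot_eq_or (N := N) (f := f) with hq | ⟨k, hq, hk⟩
    · have : d < N := by
        by_contra! h
        rw [hf (d + 1) (by omega)] at hd
        exact (Bool.le_true _).not_gt hd
      exact ⟨d, by simp [hq, this, hd]⟩
    · exact ⟨k, by simp [hq, hk]⟩

end BinarySeq

open BinarySeq

section Words

variable {n : ℕ}

@[simp]
theorem extWord_coe (w : Fin n → Bool) (j : Fin n) : extWord n w j = w j :=
  dif_pos j.isLt

theorem extWord_of_le (w : Fin n → Bool) {j : ℕ} (hj : n ≤ j) : extWord n w j = true :=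
  dif_neg (by omega)

theorem lt_of_extWord_eq_false {w : Fin n → Bool} {j : ℕ} (h : extWord n w j = false) : j < n :=
  not_le.1 fun hj => by simp [extWord_of_le w hj] at h

theorem extWord_injective : Injective (extWord n) :=
  fun v w h => funext fun j => by simpa using congrFun h j

theorem extWord_restrict {g : ℕ → Bool} (hg : ∀ j, n ≤ j → g j = true) :
    extWord n (fun j : Fin n => g j) = g := by
  ext j
  by_cases hj : j < n
  · exact extWord_coe _ ⟨j, hj⟩
  · rw [extWord_of_le _ (not_lt.1 hj), hg j (not_lt.1 hj)]

theorem extWord_nib (w : Fin n → Bool) : extWord n (nib n w) = nibSeq (extWord n w) := by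
  have hdesc (i : ℕ) : (extWord n w i = true ∧ extWord n w (i + 1) = false) ↔
      extWord n w (i + 1) < extWord n w i := by
    rw [Bool.lt_iff, and_comm]
  unfold nib
  split_ifs with hD
  · set D := univ.filter fun i : Fin n => extWord n w i = true ∧ extWord n w (i + 1) = false
    set m := D.min' hD
    have hm := (hdesc m).1 (mem_filter.1 (D.min'_mem hD)).2
    have hm_lt : (m : ℕ) + 1 < n := lt_of_extWord_eq_false (Bool.lt_iff.1 hm).1
    have hex : ∃ i, extWord n w (i + 1) < extWord n w i := ⟨m, hm⟩
    have hmin : (m : ℕ) = Nat.find hex := by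
      refine le_antisymm ?_ (Nat.find_min' hex hm)
      have hlt : Nat.find hex < n := (Nat.find_min' hex hm).trans_lt m.isLt
      exact D.min'_le ⟨Nat.find hex, hlt⟩
        (mem_filter.2 ⟨mem_univ _, (hdesc _).2 (Nat.find_spec hex)⟩)
    rw [nibSeq_of_descent hex, ← hmin]
    ext j
    rw [comp_swap_apply]
    by_cases hj : j < n
    · obtain ⟨hm1, hm0⟩ := Bool.lt_iff.1 hm
      rw [extWord_coe _ ⟨j, hj⟩, extWord_coe _ ⟨j, hj⟩]
      simp only [Fin.ext_iff]
      split_ifs <;> simp_all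
    · rw [extWord_of_le _ (not_lt.1 hj), if_neg (by omega), if_neg (by omega),
        extWord_of_le _ (not_lt.1 hj)]
  · rw [nibSeq_of_monotone]
    refine monotone_nat_of_le_succ fun i => not_lt.1 fun hi => hD ?_
    have hlt : i + 1 < n := lt_of_extWord_eq_false (Bool.lt_iff.1 hi).1
    exact ⟨⟨i, by omega⟩, mem_filter.2 ⟨mem_univ _, (hdesc i).2 hi⟩⟩

def swapLetters (w : Fin n → Bool) (i : ℕ) : Fin n → Bool :=
  fun j => extWord n w (Equiv.swap i (i + 1) j)

theorem extWord_swapLetters {w : Fin n → Bool} {i : ℕ} (hi : i + 1 < n) :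
    extWord n (swapLetters w i) = extWord n w ∘ Equiv.swap i (i + 1) :=
  extWord_restrict (g := extWord n w ∘ Equiv.swap i (i + 1)) fun j hj => by
    rw [comp_swap_apply, if_neg (by omega), if_neg (by omega), extWord_of_le w hj]

theorem swapLetters_ne {w : Fin n → Bool} {i : ℕ} (hi : i + 1 < n)
    (hasc : extWord n w i < extWord n w (i + 1)) : swapLetters w i ≠ w := by
  intro h
  have := congrFun (congrArg (extWord n) h) i
  rw [extWord_swapLetters hi, comp_swap_apply, if_pos rfl] at this
  exact hasc.ne' this

theorem swapLetters_injOn (w : Fin n → Bool) :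
    Set.InjOn (swapLetters w) {i | i + 1 < n ∧ extWord n w i < extWord n w (i + 1)} := by
  intro i ⟨hi, hasc_i⟩ j ⟨hj, hasc_j⟩ h
  have := congrFun (congrArg (extWord n) h) i
  rw [extWord_swapLetters hi, extWord_swapLetters hj, comp_swap_apply, comp_swap_apply,
    if_pos rfl] at this
  obtain ⟨hi0, hi1⟩ := Bool.lt_iff.1 hasc_i
  obtain ⟨hj0, -⟩ := Bool.lt_iff.1 hasc_j
  by_contra hij
  split_ifs at this with h1 <;> simp_all

theorem nib_eq_iff {v w : Fin n → Bool} :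
    nib n v = w ↔ (Monotone (extWord n w) ∧ v = w) ∨
      ∃ i ∈ {i ∈ range (pivot (n - 1) (extWord n w)) | extWord n w i < extWord n w (i + 1)},
        swapLetters w i = v := by
  rw [← extWord_injective.eq_iff, extWord_nib, nibSeq_eq_iff, extWord_injective.eq_iff]
  refine or_congr_right (exists_congr fun i => ?_)
  simp only [mem_filter, mem_range]
  constructor
  · rintro ⟨hi, hv⟩
    have hlt : i + 1 < n := lt_of_extWord_eq_false (w := v) (by
      rw [hv, comp_swap_apply, if_neg (by omega), if_pos rfl]; exact (Bool.lt_iff.1 hi.1).1)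
    rw [isNibSite_iff_lt_pivot (N := n - 1) (by omega)] at hi
    refine ⟨⟨hi.2, hi.1⟩, extWord_injective ?_⟩
    rw [extWord_swapLetters hlt, hv]
  · rintro ⟨⟨hlt, hi⟩, rfl⟩
    have := (pivot_le (N := n - 1) (f := extWord n w))
    refine ⟨(isNibSite_iff_lt_pivot (by omega)).2 ⟨hi, hlt⟩, extWord_swapLetters (by omega)⟩

open Classical in
theorem card_fiber_nib (w : Fin n → Bool) :
    #{v | nib n v = w} = (if Monotone (extWord n w) then 1 else 0) +
      #{i ∈ range (pivot (n - 1) (extWord n w)) | extWord n w i < extWord n w (i + 1)} := by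
  set S := {i ∈ range (pivot (n - 1) (extWord n w)) | extWord n w i < extWord n w (i + 1)}
  have hS : ∀ i ∈ S, i + 1 < n ∧ extWord n w i < extWord n w (i + 1) := fun i hi => by
    have := (pivot_le (N := n - 1) (f := extWord n w))
    simp only [S, mem_filter, mem_range] at hi
    exact ⟨by omega, hi.2⟩
  have himage :
      univ.filter (fun v => ∃ i ∈ S, swapLetters w i = v) = S.image (swapLetters w) := by
    ext v
    simp
  rw [filter_congr fun v _ => nib_eq_iff, filter_or, himage, card_union_of_disjoint,
    card_image_of_injOn fun i hi j hj => swapLetters_injOn w (hS i hi) (hS j hj)]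
  · split_ifs with hmono <;> simp [hmono, filter_eq']
  · refine disjoint_left.2 fun v hv hv' => ?_
    obtain ⟨i, hi, rfl⟩ := mem_image.1 hv'
    exact swapLetters_ne (hS i hi).1 (hS i hi).2 (mem_filter.1 hv).2.2

theorem card_fiber_nib_add_toNat (w : Fin n → Bool) :
    #{v | nib n v = w} + (extWord n w 0).toNat =
      1 + (extWord n w (pivot (n - 1) (extWord n w))).toNat := by
  have hf : ∀ i, n - 1 < i → extWord n w i = true := fun i hi => extWord_of_le w (by omega)
  rw [card_fiber_nib, add_assoc, card_ascents_add, card_descents_lt_pivot hf, ← add_assoc]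
  split_ifs <;> rfl

theorem card_fiber_nib_le_two (w : Fin n → Bool) : #{v | nib n v = w} ≤ 2 := by
  have := card_fiber_nib_add_toNat w
  have := Bool.toNat_le (extWord n w (pivot (n - 1) (extWord n w)))
  omega

theorem card_filter_card_fiber_nib_eq_two (hn : 2 ≤ n) :
    #{w : Fin n → Bool | #{v | nib n v = w} = 2} = 2 ^ (n - 2) := by
  have hlt (w : Fin n → Bool) : pivot (n - 1) (extWord n w) < n :=
    (pivot_le (N := n - 1)).trans_lt (by omega)
  set p : (Fin n → Bool) → Fin n := fun w => ⟨pivot (n - 1) (extWord n w), hlt w⟩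
  set i₀ : Fin n := ⟨0, by omega⟩
  have hp₀ (w : Fin n → Bool) : i₀ ≠ p w :=
    Fin.ne_of_val_ne (pivot_pos (by omega)).ne
  have hfiber (w : Fin n → Bool) :
      #{v | nib n v = w} = 2 ↔ w i₀ = false ∧ w (p w) = true := by
    rw [← extWord_coe w i₀, ← extWord_coe w (p w)]
    show _ ↔ extWord n w 0 = false ∧ extWord n w (pivot (n - 1) (extWord n w)) = true
    have := card_fiber_nib_add_toNat w
    generalize #{v | nib n v = w} = F at this ⊢
    revert this
    cases extWord n w 0 <;> cases extWord n w (pivot (n - 1) (extWord n w)) <;> simp <;> omega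
  have hp (w : Fin n → Bool) (b : Bool) : p (update w (p w) b) = p w := by
    refine Fin.ext (pivot_congr fun i hi => ?_)
    rw [extWord_coe _ ⟨i, hi.trans (hlt w)⟩, extWord_coe _ ⟨i, hi.trans (hlt w)⟩,
      update_of_ne (Fin.ne_of_val_ne hi.ne)]
  have h := two_mul_card_filter_apply_eq_true p hp (fun w => w i₀ = false)
    fun w b => by rw [update_of_ne (hp₀ w)]
  have hhalf : #{w : Fin n → Bool | w i₀ = false} = 2 ^ (n - 1) := by
    have := Fintype.card_filter_piFinset_const_eq_of_mem (univ : Finset Bool) i₀ (mem_univ false)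
    rwa [Fintype.piFinset_univ, card_univ, Fintype.card_bool, Fintype.card_fin] at this
  have hpow : 2 ^ (n - 1) = 2 * 2 ^ (n - 2) := by
    rw [← pow_succ']
    congr 1
    omega
  rw [filter_congr fun w _ => hfiber w]
  omega

end Words

/-- For `n ≥ 2`, the degree of nibble sort on `{0,1}ⁿ` is `3/2`: the sum of the
squared fiber sizes is `3·2^(n−1)`; exactly `2^(n−1)` words have one preimage,
exactly `2^(n−2)` words have two preimages, and no word has more than two. -/
theorem deg_nib (n : ℕ) (hn : 2 ≤ n) :
    (∑ w : Fin n → Bool,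
        (Finset.univ.filter fun v : Fin n → Bool => nib n v = w).card ^ 2)
        = 3 * 2 ^ (n - 1) ∧
    (Finset.univ.filter fun w : Fin n → Bool =>
        (Finset.univ.filter fun v : Fin n → Bool => nib n v = w).card = 1).card
        = 2 ^ (n - 1) ∧
    (Finset.univ.filter fun w : Fin n → Bool =>
        (Finset.univ.filter fun v : Fin n → Bool => nib n v = w).card = 2).card
        = 2 ^ (n - 2) ∧
    ∀ w : Fin n → Bool,
      (Finset.univ.filter fun v : Fin n → Bool => nib n v = w).card ≤ 2 := by
  have hle (w : Fin n → Bool) : #{v | nib n v = w} ≤ 2 := card_fiber_nib_le_two w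
  have htwo := card_filter_card_fiber_nib_eq_two hn
  have hsum : ∑ w : Fin n → Bool, #{v | nib n v = w} = 2 ^ n := by
    rw [← card_eq_sum_card_fiberwise fun v _ => mem_univ (nib n v), card_univ, Fintype.card_fun,
      Fintype.card_bool, Fintype.card_fin]
  have hsum₁ := sum_pow_eq_of_le_two univ _ (fun w _ => hle w) one_ne_zero
  have hsum₂ := sum_pow_eq_of_le_two univ _ (fun w _ => hle w) two_ne_zero
  simp only [pow_one] at hsum₁
  obtain ⟨m, rfl⟩ : ∃ m, n = m + 2 := ⟨n - 2, by omega⟩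
  simp only [Nat.add_sub_cancel, show m + 2 - 1 = m + 1 by omega, pow_succ] at *
  refine ⟨by omega, by omega, htwo, hle⟩
end
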